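/- arXiv:1310.4594 — 2 statements merged into one kernel-verified Lean document; each statement's English description precedes it below -/
import Mathlib

section
/- Let L be a reduced 1-compact compactly generated multiplicative lattice. If x* and y* are distinct prime elements of L, then x·y = 0. -/
variable {α : Type*}

/-- Iterated product `a^n` in a multiplicative lattice (with `a^0 = ⊤`). -/
def mpow [CompleteLattice α] (mul : α → α → α) (a : α) : ℕ → α
  | 0 => ⊤
  | n + 1 => mul a (mpow mul a n)

/-- `mul` makes the complete lattice `α` into a multiplicative lattice. -/
def IsMulLattice [CompleteLattice α] (mul : α → α → α) : Prop :=
  (∀ a b : α, mul a b = mul b a) ∧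
  (∀ a b c : α, mul (mul a b) c = mul a (mul b c)) ∧
  (∀ (a : α) (s : Set α), mul a (sSup s) = ⨆ b ∈ s, mul a b) ∧
  (∀ a b : α, mul a b ≤ a ⊓ b) ∧
  (∀ a : α, mul a ⊤ = a)

/-- The multiplicative lattice is reduced: the only nilpotent element is `⊥`. -/
def LatReduced [CompleteLattice α] (mul : α → α → α) : Prop :=
  ∀ (a : α) (n : ℕ), mpow mul a (n + 1) = ⊥ → a = ⊥

/-- `a* = sup {x | x·a = 0}`. -/
def starAnn [CompleteLattice α] (mul : α → α → α) (a : α) : α :=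
  sSup {x : α | mul x a = ⊥}

/-- A prime element of a multiplicative lattice. -/
def IsPrimeElt [CompleteLattice α] (mul : α → α → α) (p : α) : Prop :=
  p ≠ ⊤ ∧ ∀ a b : α, mul a b ≤ p → a ≤ p ∨ b ≤ p

/-- The zero-divisor graph `Γᵐ(L)` of a multiplicative lattice. -/
def zdg [CompleteLattice α] (mul : α → α → α) : SimpleGraph α where
  Adj a b := a ≠ b ∧ a ≠ ⊥ ∧ b ≠ ⊥ ∧ mul a b = ⊥ ∧ mul b a = ⊥
  symm := ⟨fun a b h => ⟨h.1.symm, h.2.2.1, h.2.1, h.2.2.2.2, h.2.2.2.1⟩⟩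
  loopless := ⟨fun a h => h.1 rfl⟩

/-- `Clique(Γᵐ(L)) < ∞`. -/
def CliqueBounded [CompleteLattice α] (mul : α → α → α) : Prop :=
  ∃ N : ℕ, ∀ s : Finset α, (zdg mul).IsClique ↑s → s.card ≤ N

/-! `x·x* = ⊥` lies below every prime, so primality of `y*` gives `x ≤ y*` or `x* ≤ y*`, and
symmetrically `y ≤ x*` or `y* ≤ x*`. As `x* ≠ y*`, one of `x ≤ y*`, `y ≤ x*` holds, and either one
says `x·y = ⊥`, because `a*` is the largest element annihilating `a`. -/

namespace IsMulLattice

variable [CompleteLattice α] {mul : α → α → α}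

theorem mul_comm (hL : IsMulLattice mul) (a b : α) : mul a b = mul b a := hL.1 a b

theorem mul_sSup (hL : IsMulLattice mul) (a : α) (s : Set α) : mul a (sSup s) = ⨆ b ∈ s, mul a b :=
  hL.2.2.1 a s

theorem monotone_mul (hL : IsMulLattice mul) (c : α) : Monotone (mul c) := by
  intro a b hab
  have hsup : mul c b = ⨆ d ∈ ({a, b} : Set α), mul c d := by
    rw [← hL.mul_sSup, sSup_pair, sup_eq_right.mpr hab]
  exact hsup ▸ le_biSup (mul c) (Set.mem_insert a {b})

theorem starAnn_mul_eq_bot (hL : IsMulLattice mul) (a : α) : mul (starAnn mul a) a = ⊥ := by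
  rw [hL.mul_comm, starAnn, hL.mul_sSup, eq_bot_iff]
  refine iSup₂_le fun b hb => ?_
  rw [hL.mul_comm]
  exact hb.le

theorem le_starAnn_iff (hL : IsMulLattice mul) {a b : α} : b ≤ starAnn mul a ↔ mul b a = ⊥ := by
  refine ⟨fun h => eq_bot_iff.mpr ?_, fun h => le_sSup h⟩
  calc mul b a = mul a b := hL.mul_comm b a
    _ ≤ mul a (starAnn mul a) := hL.monotone_mul a h
    _ = ⊥ := by rw [hL.mul_comm, hL.starAnn_mul_eq_bot]

theorem le_or_starAnn_le_of_isPrimeElt (hL : IsMulLattice mul) {p : α} (hp : IsPrimeElt mul p)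
    (a : α) : a ≤ p ∨ starAnn mul a ≤ p :=
  hp.2 a (starAnn mul a) (by rw [hL.mul_comm, hL.starAnn_mul_eq_bot]; exact bot_le)

end IsMulLattice

theorem distinct_prime_annihilators_general [CompleteLattice α]
    (mul : α → α → α) (hL : IsMulLattice mul) (x y : α)
    (hx : IsPrimeElt mul (starAnn mul x)) (hy : IsPrimeElt mul (starAnn mul y))
    (hne : starAnn mul x ≠ starAnn mul y) :
    mul x y = ⊥ := by
  rcases hL.le_or_starAnn_le_of_isPrimeElt hy x with hxy | hxy
  · exact hL.le_starAnn_iff.mp hxy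
  rcases hL.le_or_starAnn_le_of_isPrimeElt hx y with hyx | hyx
  · rw [hL.mul_comm]
    exact hL.le_starAnn_iff.mp hyx
  exact absurd (le_antisymm hxy hyx) hne

theorem distinct_prime_annihilators [CompleteLattice α] [IsCompactlyGenerated α]
    (mul : α → α → α) (hL : IsMulLattice mul) (hred : LatReduced mul)
    (htop : IsCompactElement (⊤ : α)) (x y : α)
    (hx : IsPrimeElt mul (starAnn mul x)) (hy : IsPrimeElt mul (starAnn mul y))
    (hne : starAnn mul x ≠ starAnn mul y) :
    mul x y = ⊥ :=
  distinct_prime_annihilators_general mul hL x y hx hy hne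
end

section
/- Let L be a reduced 1-compact compactly generated multiplicative lattice with Clique(Γᵐ(L)) < ∞. Then the set of maximal elements of {x* : x ∈ L, x* ≠ 1} is finite. -/
variable {α : Type*}

/-!
If `x*` and `y*` are distinct maximal proper annihilators and `x · y ≠ 0`, then `(x · y)*` is a
proper annihilator containing both, so maximality forces `x* = (x · y)* = y*`. Hence
representatives `x` of distinct maximal annihilators are pairwise adjacent in `Γᵐ(L)`, and a
bound on the clique number bounds their number.
-/

variable {β γ : Type*}

theorem SimpleGraph.IsClique.finite_of_card_le {G : SimpleGraph β} {N : ℕ}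
    (hN : ∀ s : Finset β, G.IsClique ↑s → s.card ≤ N) {s : Set β} (hs : G.IsClique s) :
    s.Finite := by
  by_contra hinf
  obtain ⟨t, hts, hcard⟩ := Set.Infinite.exists_subset_card_eq hinf (N + 1)
  have := hN t (hs.subset hts)
  omega

theorem SimpleGraph.finite_of_pairwise_adj_comp {G : SimpleGraph β} {N : ℕ}
    (hN : ∀ s : Finset β, G.IsClique ↑s → s.card ≤ N) {S : Set γ} {f : γ → β}
    (hS : S.Pairwise (Function.onFun G.Adj f)) : S.Finite := by
  have hinj : S.InjOn f := fun p hp q hq hfpq => by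
    by_contra hpq
    exact (hS hp hq hpq).ne hfpq
  exact (IsClique.finite_of_card_le hN (hinj.pairwise_image.mpr hS)).of_finite_image hinj

def IsMaxAnnihilator [CompleteLattice α] (mul : α → α → α) (p : α) : Prop :=
  (∃ x : α, p = starAnn mul x) ∧ p ≠ ⊤ ∧
    ∀ a : α, starAnn mul a ≠ ⊤ → p ≤ starAnn mul a → p = starAnn mul a

namespace IsMulLattice

variable [CompleteLattice α] {mul : α → α → α} (hL : IsMulLattice mul)
include hL

theorem mul_bot (a : α) : mul a ⊥ = ⊥ :=
  le_bot_iff.mp ((hL.2.2.2.1 a ⊥).trans inf_le_right)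

theorem bot_mul (a : α) : mul ⊥ a = ⊥ :=
  le_bot_iff.mp ((hL.2.2.2.1 ⊥ a).trans inf_le_left)

theorem mul_starAnn (a : α) : mul a (starAnn mul a) = ⊥ := by
  rw [starAnn, hL.2.2.1]
  exact le_bot_iff.mp (iSup₂_le fun b hb => (hL.1 a b).trans_le hb.le)

theorem starAnn_bot : starAnn mul (⊥ : α) = ⊤ :=
  top_le_iff.mp (le_sSup (hL.mul_bot ⊤))

theorem eq_bot_of_starAnn_eq_top {a : α} (h : starAnn mul a = ⊤) : a = ⊥ := by
  simpa only [h, hL.2.2.2.2] using hL.mul_starAnn a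

theorem starAnn_le_starAnn_mul (a b : α) : starAnn mul a ≤ starAnn mul (mul a b) :=
  sSup_le_sSup fun z (hz : mul z a = ⊥) => show mul z (mul a b) = ⊥ by
    rw [← hL.2.1, hz, hL.bot_mul]

theorem mul_eq_bot_of_isMaxAnnihilator {x y : α}
    (hx : IsMaxAnnihilator mul (starAnn mul x)) (hy : IsMaxAnnihilator mul (starAnn mul y))
    (hxy : starAnn mul x ≠ starAnn mul y) : mul x y = ⊥ := by
  by_contra hne
  have hproper : starAnn mul (mul x y) ≠ ⊤ := fun h => hne (hL.eq_bot_of_starAnn_eq_top h)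
  have hxle : starAnn mul x ≤ starAnn mul (mul x y) := hL.starAnn_le_starAnn_mul x y
  have hyle : starAnn mul y ≤ starAnn mul (mul x y) := by
    simpa only [hL.1 y x] using hL.starAnn_le_starAnn_mul y x
  exact hxy ((hx.2.2 _ hproper hxle).trans (hy.2.2 _ hproper hyle).symm)

theorem zdg_adj_of_isMaxAnnihilator {x y : α}
    (hx : IsMaxAnnihilator mul (starAnn mul x)) (hy : IsMaxAnnihilator mul (starAnn mul y))
    (hxy : starAnn mul x ≠ starAnn mul y) : (zdg mul).Adj x y := by
  have hxy' : mul x y = ⊥ := hL.mul_eq_bot_of_isMaxAnnihilator hx hy hxy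
  refine ⟨fun h => hxy (h ▸ rfl), ?_, ?_, hxy', (hL.1 y x).trans hxy'⟩
  · rintro rfl
    exact hx.2.1 hL.starAnn_bot
  · rintro rfl
    exact hy.2.1 hL.starAnn_bot

end IsMulLattice

theorem maximal_annihilators_finite_general [CompleteLattice α]
    (mul : α → α → α) (hL : IsMulLattice mul)
    (hclique : CliqueBounded mul) :
    {p : α | (∃ x : α, p = starAnn mul x) ∧ p ≠ ⊤ ∧
      ∀ a : α, starAnn mul a ≠ ⊤ → p ≤ starAnn mul a → p = starAnn mul a}.Finite := by
  obtain ⟨N, hN⟩ := hclique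
  choose! rep hrep using fun p (hp : IsMaxAnnihilator mul p) => hp.1
  refine SimpleGraph.finite_of_pairwise_adj_comp (f := rep) hN fun p hp q hq hpq => ?_
  have hp' : IsMaxAnnihilator mul (starAnn mul (rep p)) := hrep p hp ▸ hp
  have hq' : IsMaxAnnihilator mul (starAnn mul (rep q)) := hrep q hq ▸ hq
  exact hL.zdg_adj_of_isMaxAnnihilator hp' hq' (by rwa [← hrep p hp, ← hrep q hq])

theorem maximal_annihilators_finite [CompleteLattice α] [IsCompactlyGenerated α]
    (mul : α → α → α) (hL : IsMulLattice mul) (hred : LatReduced mul)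
    (htop : IsCompactElement (⊤ : α))
    (hclique : CliqueBounded mul) :
    {p : α | (∃ x : α, p = starAnn mul x) ∧ p ≠ ⊤ ∧
      ∀ a : α, starAnn mul a ≠ ⊤ → p ≤ starAnn mul a → p = starAnn mul a}.Finite :=
  maximal_annihilators_finite_general mul hL hclique
end
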